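/- For μ > 0, λ > 0, α ∈ (0,1), t > 0 and x > 0, the series λ^t e^{-μx} ∑_{k=0}^∞ (μ^α - λ)^k (Γ(t+k)/(Γ(k+1)Γ(t))) x^{α(t+k)-1}/Γ(α(t+k)) converges absolutely. -/

import Mathlib

/-!
Since `Γ(t + k) / (k! Γ(t)) ≤ (t + 1) ^ k` and
`x ^ (α (t + k) - 1) = x ^ (α t - 1) (x ^ α) ^ k`, the `k`-th term is at most a constant times
`C ^ k / Γ(α t + α k)`. Comparing with factorials, `Γ` eventually dominates every exponential
`R ^ y`; taking `R ^ α = C + 1` bounds these terms by a geometric series of ratio `C / (C + 1)`.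
-/

open Real Filter
open scoped Nat

namespace Real

theorem eventually_rpow_le_Gamma {R : ℝ} (hR : 1 ≤ R) :
    ∀ᶠ y in atTop, R ^ y ≤ Gamma y := by
  have hfloor : Tendsto (fun y : ℝ => ⌊y - 1⌋₊) atTop atTop :=
    tendsto_nat_floor_atTop.comp (tendsto_atTop_add_const_right _ (-1) tendsto_id)
  filter_upwards [eventually_ge_atTop 2,
    hfloor.eventually (FloorSemiring.eventually_mul_pow_lt_factorial_sub (R ^ 2) R 0)]
    with y hy hfac
  set m := ⌊y - 1⌋₊
  have hm_le : (m : ℝ) + 1 ≤ y := by linarith [Nat.floor_le (by linarith : 0 ≤ y - 1)]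
  have hm_two : (2 : ℝ) ≤ m + 1 := by
    have : 1 ≤ m := Nat.le_floor (by push_cast; linarith)
    exact_mod_cast Nat.succ_le_succ this
  calc R ^ y ≤ R ^ ((m + 2 : ℕ) : ℝ) :=
        rpow_le_rpow_of_exponent_le hR (by push_cast; linarith [Nat.lt_floor_add_one (y - 1)])
    _ = R ^ 2 * R ^ m := by rw [rpow_natCast, pow_add, mul_comm]
    _ ≤ m ! := by simpa using hfac.le
    _ = Gamma (m + 1) := (Gamma_nat_eq_factorial m).symm
    _ ≤ Gamma y := Gamma_strictMonoOn_Ici.monotoneOn hm_two (hm_two.trans hm_le) hm_le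

theorem summable_pow_div_Gamma_add_mul (C a : ℝ) {b : ℝ} (hb : 0 < b) :
    Summable fun k : ℕ => C ^ k / Gamma (a + b * k) := by
  set R := (|C| + 1) ^ b⁻¹
  have hR : 1 ≤ R := one_le_rpow (by linarith [abs_nonneg C]) (by positivity)
  have hRb : R ^ b = |C| + 1 := by
    rw [← rpow_mul (by positivity), inv_mul_cancel₀ hb.ne', rpow_one]
  have hq : |C| / (|C| + 1) < 1 := (div_lt_one (by positivity)).mpr (by linarith)
  have hlin : Tendsto (fun k : ℕ => a + b * k) atTop atTop :=
    tendsto_atTop_add_const_left _ a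
      (tendsto_natCast_atTop_atTop.const_mul_atTop hb)
  refine Summable.of_norm_bounded_eventually_nat
    ((summable_geometric_of_lt_one (by positivity) hq).mul_left (R ^ (-a))) ?_
  filter_upwards [hlin.eventually (eventually_rpow_le_Gamma hR)] with k hk
  have hRpow : R ^ (a + b * k) = R ^ a * (|C| + 1) ^ k := by
    rw [rpow_add (by positivity), rpow_mul (by positivity), hRb, rpow_natCast]
  have hGamma : 0 < Gamma (a + b * k) := (rpow_pos_of_pos (by positivity) _).trans_le hk
  rw [norm_div, norm_pow, norm_eq_abs, norm_of_nonneg hGamma.le, div_pow, rpow_neg (by positivity)]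
  calc |C| ^ k / Gamma (a + b * k) ≤ |C| ^ k / R ^ (a + b * k) := by gcongr
    _ = (R ^ a)⁻¹ * (|C| ^ k / (|C| + 1) ^ k) := by rw [hRpow]; field_simp

theorem Gamma_add_nat_le_mul_factorial {t : ℝ} (ht : 0 < t) (k : ℕ) :
    Gamma (t + k) ≤ (t + 1) ^ k * k ! * Gamma t := by
  induction k with
  | zero => simp
  | succ k ih =>
    have hstep : t + k ≤ (t + 1) * (k + 1) := by nlinarith [mul_nonneg ht.le k.cast_nonneg]
    calc Gamma (t + (k + 1 : ℕ)) = (t + k) * Gamma (t + k) := by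
          rw [Nat.cast_succ, ← add_assoc, Gamma_add_one (by positivity : t + k ≠ 0)]
      _ ≤ ((t + 1) * (k + 1)) * ((t + 1) ^ k * k ! * Gamma t) := by
          gcongr
      _ = (t + 1) ^ (k + 1) * (k + 1 : ℕ)! * Gamma t := by
          rw [Nat.factorial_succ]; push_cast; ring

theorem Gamma_add_nat_div_le {t : ℝ} (ht : 0 < t) (k : ℕ) :
    Gamma (t + k) / (Gamma (k + 1) * Gamma t) ≤ (t + 1) ^ k := by
  rw [Gamma_nat_eq_factorial, div_le_iff₀ (by positivity), ← mul_assoc]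
  exact Gamma_add_nat_le_mul_factorial ht k

end Real

theorem tempered_mllp_density_abs_convergent_general (m lam α t x : ℝ)
    (hα : α ∈ Set.Ioo (0:ℝ) 1) (ht : 0 < t) (hx : 0 < x) :
    Summable (fun k : ℕ =>
      |lam ^ t * Real.exp (-m * x) * (m ^ α - lam) ^ k *
        (Gamma (t + k) / (Gamma (k + 1) * Gamma t)) *
        (x ^ (α * (t + k) - 1) / Gamma (α * (t + k)))|) := by
  obtain ⟨hα0, -⟩ := hα
  set c := lam ^ t * Real.exp (-m * x)
  set A := m ^ α - lam
  refine Summable.of_nonneg_of_le (fun k => abs_nonneg _) (fun k => ?_)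
    ((summable_pow_div_Gamma_add_mul (|A| * (t + 1) * x ^ α) (α * t) hα0).mul_left
      (|c| * x ^ (α * t - 1)))
  have hxpow : x ^ (α * (t + k) - 1) = x ^ (α * t - 1) * (x ^ α) ^ k := by
    rw [show α * (t + k) - 1 = (α * t - 1) + α * k by ring, rpow_add hx, rpow_mul hx.le,
      rpow_natCast]
  have hratio_nonneg : 0 ≤ Gamma (t + k) / (Gamma (k + 1) * Gamma t) := by positivity
  have hpow_nonneg : 0 ≤ x ^ (α * (t + k) - 1) / Gamma (α * (t + k)) := by positivity
  rw [abs_mul, abs_mul, abs_mul, abs_pow, abs_of_nonneg hratio_nonneg, abs_of_nonneg hpow_nonneg,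
    hxpow, mul_add α t]
  calc |c| * |A| ^ k * (Gamma (t + k) / (Gamma (k + 1) * Gamma t)) *
        (x ^ (α * t - 1) * (x ^ α) ^ k / Gamma (α * t + α * k))
      ≤ |c| * |A| ^ k * (t + 1) ^ k *
        (x ^ (α * t - 1) * (x ^ α) ^ k / Gamma (α * t + α * k)) := by
        gcongr
        exact Gamma_add_nat_div_le ht k
    _ = |c| * x ^ (α * t - 1) * ((|A| * (t + 1) * x ^ α) ^ k / Gamma (α * t + α * k)) := by
        rw [mul_pow, mul_pow]
        ring

theorem tempered_mllp_density_abs_convergent (m lam α t x : ℝ) (hm : 0 < m) (hlam : 0 < lam)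
    (hα : α ∈ Set.Ioo (0:ℝ) 1) (ht : 0 < t) (hx : 0 < x) :
    Summable (fun k : ℕ =>
      |lam ^ t * Real.exp (-m * x) * (m ^ α - lam) ^ k *
        (Gamma (t + k) / (Gamma (k + 1) * Gamma t)) *
        (x ^ (α * (t + k) - 1) / Gamma (α * (t + k)))|) :=
  tempered_mllp_density_abs_convergent_general m lam α t x hα ht hx
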